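/- arXiv:2507.00009 — 7 statements merged into one kernel-verified Lean document; each statement's English description precedes it below -/
import Mathlib

section
/- For a real Hilbert space H, any orthogonal projection P, and any x, y ∈ H, ‖x‖²·‖y‖² − ⟨x,y⟩² ≥ (‖Px‖·‖P^⊥y‖ − ‖Py‖·‖P^⊥x‖)². -/
/-!
Writing `x = Px + P^⊥x` and `y = Py + P^⊥y`, each of `‖x‖²`, `‖y‖²` and `⟪x, y⟫` splits into
a `P`-part and a `P^⊥`-part. With `a, b, c, d` the norms of `Px, Py, P^⊥x, P^⊥y`, Lagrange's identity
`(a² + c²)(b² + d²) = (ab + cd)² + (ad - bc)²` and Cauchy–Schwarz on each part,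
`|⟪x, y⟫| ≤ ab + cd`, give the bound.
-/

theorem sq_mul_sub_mul_le_of_abs_le {a b c d p q : ℝ} (hp : |p| ≤ a * b) (hq : |q| ≤ c * d) :
    (a * d - b * c) ^ 2 ≤ (a ^ 2 + c ^ 2) * (b ^ 2 + d ^ 2) - (p + q) ^ 2 := by
  have hpq : (p + q) ^ 2 ≤ (a * b + c * d) ^ 2 :=
    sq_le_sq' (by linarith [neg_abs_le p, neg_abs_le q])
      (by linarith [le_abs_self p, le_abs_self q])
  linarith [show (a ^ 2 + c ^ 2) * (b ^ 2 + d ^ 2) = (a * b + c * d) ^ 2 + (a * d - b * c) ^ 2 by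
    ring]

namespace LinearMap.IsSymmetricProjection

open scoped InnerProductSpace

variable {𝕜 E : Type*} [RCLike 𝕜] [NormedAddCommGroup E] [InnerProductSpace 𝕜 E]
  {T : E →ₗ[𝕜] E}

theorem map_map (hT : T.IsSymmetricProjection) (v : E) : T (T v) = T v :=
  congr($hT.isIdempotentElem.eq v)

theorem inner_map_sub_map_eq_zero (hT : T.IsSymmetricProjection) (u v : E) :
    ⟪T u, v - T v⟫_𝕜 = 0 := by
  rw [hT.isSymmetric, map_sub, hT.map_map, sub_self, inner_zero_right]

theorem inner_sub_map_map_eq_zero (hT : T.IsSymmetricProjection) (u v : E) :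
    ⟪u - T u, T v⟫_𝕜 = 0 := by
  rw [← inner_conj_symm, hT.inner_map_sub_map_eq_zero, map_zero]

theorem norm_sq_eq_add (hT : T.IsSymmetricProjection) (x : E) :
    ‖x‖ ^ 2 = ‖T x‖ ^ 2 + ‖x - T x‖ ^ 2 := by
  simpa [sq] using norm_add_sq_eq_norm_sq_add_norm_sq_of_inner_eq_zero (T x) (x - T x)
    (hT.inner_map_sub_map_eq_zero x x)

theorem inner_eq_add (hT : T.IsSymmetricProjection) (x y : E) :
    ⟪x, y⟫_𝕜 = ⟪T x, T y⟫_𝕜 + ⟪x - T x, y - T y⟫_𝕜 := by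
  conv_lhs => rw [← add_sub_cancel (T x) x, ← add_sub_cancel (T y) y]
  rw [inner_add_left, inner_add_right, inner_add_right, hT.inner_map_sub_map_eq_zero,
    hT.inner_sub_map_map_eq_zero, zero_add, add_zero]

end LinearMap.IsSymmetricProjection

open RealInnerProductSpace

theorem stmt10 {H : Type*} [NormedAddCommGroup H] [InnerProductSpace ℝ H] [CompleteSpace H]
    (P : H →L[ℝ] H) (hP : IsIdempotentElem P) (hsa : IsSelfAdjoint P) (x y : H) :
    ‖x‖ ^ 2 * ‖y‖ ^ 2 - ⟪x, y⟫ ^ 2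
      ≥ (‖P x‖ * ‖y - P y‖ - ‖P y‖ * ‖x - P x‖) ^ 2 := by
  have hT : (P : H →ₗ[ℝ] H).IsSymmetricProjection :=
    ⟨ContinuousLinearMap.IsIdempotentElem.toLinearMap hP, hsa.isSymmetric⟩
  rw [hT.norm_sq_eq_add x, hT.norm_sq_eq_add y, hT.inner_eq_add x y]
  exact sq_mul_sub_mul_le_of_abs_le (abs_real_inner_le_norm _ _) (abs_real_inner_le_norm _ _)
end

section
/- (Enhanced Richard inequality) For a real Hilbert space H, any orthogonal projection P, and any x, y ∈ H, |2⟨Px, y⟩ − ⟨x,y⟩| ≤ ‖Px‖·‖Py‖ + ‖P^⊥x‖·‖P^⊥y‖. -/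
open RealInnerProductSpace

namespace LinearMap.IsSymmetricProjection

open scoped InnerProductSpace

variable {𝕜 E : Type*} [RCLike 𝕜] [SeminormedAddCommGroup E] [InnerProductSpace 𝕜 E]
  {T : E →ₗ[𝕜] E}

theorem inner_map_map (hT : T.IsSymmetricProjection) (x y : E) :
    ⟪T x, T y⟫_𝕜 = ⟪T x, y⟫_𝕜 := by
  rw [← hT.isSymmetric, ← Module.End.mul_apply, hT.isIdempotentElem.eq]

theorem two_mul_inner_map_sub_inner (hT : T.IsSymmetricProjection) (x y : E) :
    2 * ⟪T x, y⟫_𝕜 - ⟪x, y⟫_𝕜 = ⟪T x, T y⟫_𝕜 - ⟪x - T x, y - T y⟫_𝕜 := by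
  simp only [inner_sub_left, inner_sub_right, hT.inner_map_map, ← hT.isSymmetric x y]
  ring

theorem norm_two_mul_inner_map_sub_inner_le (hT : T.IsSymmetricProjection) (x y : E) :
    ‖2 * ⟪T x, y⟫_𝕜 - ⟪x, y⟫_𝕜‖ ≤ ‖T x‖ * ‖T y‖ + ‖x - T x‖ * ‖y - T y‖ := by
  rw [hT.two_mul_inner_map_sub_inner]
  exact (norm_sub_le _ _).trans (add_le_add (norm_inner_le_norm _ _) (norm_inner_le_norm _ _))

end LinearMap.IsSymmetricProjection

theorem stmt12 {H : Type*} [NormedAddCommGroup H] [InnerProductSpace ℝ H] [CompleteSpace H]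
    (P : H →L[ℝ] H) (hP : IsIdempotentElem P) (hsa : IsSelfAdjoint P) (x y : H) :
    |2 * ⟪P x, y⟫ - ⟪x, y⟫| ≤ ‖P x‖ * ‖P y‖ + ‖x - P x‖ * ‖y - P y‖ := by
  have hP' : (P : H →ₗ[ℝ] H).IsSymmetricProjection :=
    (P.isStarProjection_iff_isSymmetricProjection).mp ⟨hP, hsa⟩
  simpa only [Real.norm_eq_abs, ContinuousLinearMap.coe_coe] using
    hP'.norm_two_mul_inner_map_sub_inner_le x y
end

section
/- (Enhanced Buzano inequality) For a real Hilbert space H, any orthogonal projection P, and any x, y ∈ H, 2|⟨Px, y⟩| ≤ ‖Px‖·‖Py‖ + ‖P^⊥x‖·‖P^⊥y‖ + |⟨x,y⟩|. -/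
/-!
For an orthogonal projection `P`, `⟪P x, y⟫ = ⟪P x, P y⟫` and
`⟪x, y⟫ = ⟪P x, P y⟫ + ⟪P^⊥ x, P^⊥ y⟫`, hence
`2 ⟪P x, y⟫ = ⟪P x, P y⟫ + ⟪x, y⟫ - ⟪P^⊥ x, P^⊥ y⟫`.
The triangle inequality and Cauchy–Schwarz on the first and last terms give the bound.
-/

open RealInnerProductSpace

namespace LinearMap.IsSymmetricProjection

open scoped InnerProductSpace

variable {𝕜 E : Type*} [RCLike 𝕜] [SeminormedAddCommGroup E] [InnerProductSpace 𝕜 E]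
  {T : E →ₗ[𝕜] E}

theorem apply_apply (hT : T.IsSymmetricProjection) (x : E) : T (T x) = T x :=
  congr($(hT.isIdempotentElem.eq) x)

theorem inner_apply_left_eq_inner_apply_apply (hT : T.IsSymmetricProjection) (x y : E) :
    ⟪T x, y⟫_𝕜 = ⟪T x, T y⟫_𝕜 := by
  rw [← hT.isSymmetric, hT.apply_apply]

theorem inner_sub_apply_sub_apply (hT : T.IsSymmetricProjection) (x y : E) :
    ⟪x - T x, y - T y⟫_𝕜 = ⟪x, y⟫_𝕜 - ⟪T x, T y⟫_𝕜 := by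
  have hright : ⟪x, T y⟫_𝕜 = ⟪T x, T y⟫_𝕜 := by
    rw [← hT.isSymmetric, hT.inner_apply_left_eq_inner_apply_apply]
  simp only [inner_sub_left, inner_sub_right, hright, ← hT.inner_apply_left_eq_inner_apply_apply]
  ring

theorem two_mul_inner_apply_left (hT : T.IsSymmetricProjection) (x y : E) :
    2 * ⟪T x, y⟫_𝕜 = ⟪T x, T y⟫_𝕜 + ⟪x, y⟫_𝕜 - ⟪x - T x, y - T y⟫_𝕜 := by
  rw [hT.inner_sub_apply_sub_apply, hT.inner_apply_left_eq_inner_apply_apply]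
  ring

theorem two_mul_norm_inner_apply_left_le (hT : T.IsSymmetricProjection) (x y : E) :
    2 * ‖⟪T x, y⟫_𝕜‖ ≤ ‖T x‖ * ‖T y‖ + ‖x - T x‖ * ‖y - T y‖ + ‖⟪x, y⟫_𝕜‖ := by
  have hrange := norm_inner_le_norm (𝕜 := 𝕜) (T x) (T y)
  have hker := norm_inner_le_norm (𝕜 := 𝕜) (x - T x) (y - T y)
  calc 2 * ‖⟪T x, y⟫_𝕜‖ = ‖2 * ⟪T x, y⟫_𝕜‖ := by rw [norm_mul, RCLike.norm_two]
    _ = ‖⟪T x, T y⟫_𝕜 + ⟪x, y⟫_𝕜 - ⟪x - T x, y - T y⟫_𝕜‖ := by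
      rw [hT.two_mul_inner_apply_left]
    _ ≤ ‖⟪T x, T y⟫_𝕜‖ + ‖⟪x, y⟫_𝕜‖ + ‖⟪x - T x, y - T y⟫_𝕜‖ :=
      (norm_sub_le _ _).trans (by gcongr; exact norm_add_le _ _)
    _ ≤ ‖T x‖ * ‖T y‖ + ‖x - T x‖ * ‖y - T y‖ + ‖⟪x, y⟫_𝕜‖ := by linarith

end LinearMap.IsSymmetricProjection

theorem stmt13 {H : Type*} [NormedAddCommGroup H] [InnerProductSpace ℝ H] [CompleteSpace H]
    (P : H →L[ℝ] H) (hP : IsIdempotentElem P) (hsa : IsSelfAdjoint P) (x y : H) :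
    2 * |⟪P x, y⟫| ≤ ‖P x‖ * ‖P y‖ + ‖x - P x‖ * ‖y - P y‖ + |⟪x, y⟫| := by
  have hProj : (P : H →ₗ[ℝ] H).IsSymmetricProjection :=
    ContinuousLinearMap.isStarProjection_iff_isSymmetricProjection.mp ⟨hP, hsa⟩
  simpa only [Real.norm_eq_abs, ContinuousLinearMap.coe_coe] using
    hProj.two_mul_norm_inner_apply_left_le x y
end

section
/- (Richard inequality) For a real Hilbert space H, a unit vector z ∈ H, and any x, y ∈ H, |2⟨x,z⟩⟨y,z⟩ − ⟨x,y⟩| ≤ ‖x‖·‖y‖. -/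
/-!
The quantity `2⟪x, z⟫⟪y, z⟫ - ⟪x, y⟫` is `⟪R x, y⟫`, where `R` is the reflection in the line
`ℝ ∙ z`. Since `R` is an isometry, Cauchy–Schwarz bounds it by `‖R x‖ ‖y‖ = ‖x‖ ‖y‖`.
-/

open RealInnerProductSpace

namespace Submodule

theorem reflection_unit_singleton_apply {𝕜 E : Type*} [RCLike 𝕜] [NormedAddCommGroup E]
    [InnerProductSpace 𝕜 E] {v : E} (hv : ‖v‖ = 1) (w : E) :
    (𝕜 ∙ v).reflection w = (2 * inner 𝕜 v w) • v - w := by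
  rw [reflection_apply, starProjection_unit_singleton 𝕜 hv, mul_smul, two_smul, two_smul]

theorem real_inner_reflection_unit_singleton_left {E : Type*} [NormedAddCommGroup E]
    [InnerProductSpace ℝ E] {z : E} (hz : ‖z‖ = 1) (x y : E) :
    ⟪(ℝ ∙ z).reflection x, y⟫ = 2 * ⟪x, z⟫ * ⟪y, z⟫ - ⟪x, y⟫ := by
  rw [reflection_unit_singleton_apply hz, inner_sub_left, real_inner_smul_left,
    real_inner_comm z x, real_inner_comm z y, mul_assoc]

end Submodule

theorem stmt16 {H : Type*} [NormedAddCommGroup H] [InnerProductSpace ℝ H]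
    (z : H) (hz : ‖z‖ = 1) (x y : H) :
    |2 * ⟪x, z⟫ * ⟪y, z⟫ - ⟪x, y⟫| ≤ ‖x‖ * ‖y‖ := by
  calc |2 * ⟪x, z⟫ * ⟪y, z⟫ - ⟪x, y⟫| = |⟪(ℝ ∙ z).reflection x, y⟫| := by
        rw [Submodule.real_inner_reflection_unit_singleton_left hz]
    _ ≤ ‖(ℝ ∙ z).reflection x‖ * ‖y‖ := abs_real_inner_le_norm _ _
    _ = ‖x‖ * ‖y‖ := by rw [LinearIsometryEquiv.norm_map]
end

section
/- (Walker-type inequality) For square-integrable real random variables X, Y on a probability space, (E[XY])² ≤ E[X²]·E[Y²] − (|E[X]|·σ_Y − |E[Y]|·σ_X)², where σ_X := √(E[X²] − (E[X])²) and σ_Y := √(E[Y²] − (E[Y])²). -/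
/-!
Write `E[XY] = E[X] E[Y] + cov(X, Y)` and `E[X²] = E[X]² + σ_X²`, and likewise for `Y`. The
right-hand side then collapses to `(|E[X] E[Y]| + σ_X σ_Y)²`, so the inequality is the triangle
inequality combined with the Cauchy–Schwarz bound `|cov(X, Y)| ≤ σ_X σ_Y`.
-/

open MeasureTheory ProbabilityTheory

theorem sq_integral_mul_le_integral_sq_mul_integral_sq {Ω : Type*} [MeasurableSpace Ω]
    {μ : Measure Ω} {f g : Ω → ℝ} (hf : MemLp f 2 μ) (hg : MemLp g 2 μ) :
    (∫ ω, f ω * g ω ∂μ) ^ 2 ≤ (∫ ω, f ω ^ 2 ∂μ) * ∫ ω, g ω ^ 2 ∂μ := by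
  have inner_eq {u v : Ω → ℝ} (hu : MemLp u 2 μ) (hv : MemLp v 2 μ) :
      inner ℝ (hu.toLp u) (hv.toLp v) = ∫ ω, u ω * v ω ∂μ := by
    rw [L2.inner_def]
    refine integral_congr_ae ?_
    filter_upwards [hu.coeFn_toLp, hv.coeFn_toLp] with ω hu' hv'
    rw [hu', hv', real_inner_eq_re_inner, RCLike.inner_apply, conj_trivial, mul_comm]
    rfl
  have h := real_inner_mul_inner_self_le (hf.toLp f) (hg.toLp g)
  simpa only [inner_eq, ← sq] using h

theorem abs_covariance_le_sqrt_variance_mul_sqrt_variance {Ω : Type*} [MeasurableSpace Ω]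
    {μ : Measure Ω} [IsFiniteMeasure μ] {X Y : Ω → ℝ} (hX : MemLp X 2 μ) (hY : MemLp Y 2 μ) :
    |cov[X, Y; μ]| ≤ √Var[X; μ] * √Var[Y; μ] := by
  have h := sq_integral_mul_le_integral_sq_mul_integral_sq
    (f := fun ω ↦ X ω - μ[X]) (g := fun ω ↦ Y ω - μ[Y])
    (hX.sub (memLp_const μ[X])) (hY.sub (memLp_const μ[Y]))
  rw [← variance_eq_integral hX.aemeasurable, ← variance_eq_integral hY.aemeasurable] at h
  rw [← Real.sqrt_mul (variance_nonneg X μ)]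
  exact Real.abs_le_sqrt h

theorem sq_mul_add_le_of_abs_le {a b c s t : ℝ} (hc : |c| ≤ s * t) :
    (a * b + c) ^ 2 ≤ (a ^ 2 + s ^ 2) * (b ^ 2 + t ^ 2) - (|a| * t - |b| * s) ^ 2 := by
  have key : (a ^ 2 + s ^ 2) * (b ^ 2 + t ^ 2) - (|a| * t - |b| * s) ^ 2
      = (|a * b| + s * t) ^ 2 := by
    rw [abs_mul]; nlinarith [sq_abs a, sq_abs b]
  rw [key]
  calc (a * b + c) ^ 2 ≤ (|a * b| + |c|) ^ 2 := by
        rw [← sq_abs]; gcongr; exact abs_add_le _ _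
    _ ≤ (|a * b| + s * t) ^ 2 := by gcongr

theorem stmt17 {Ω : Type*} [MeasurableSpace Ω] (μ : Measure Ω) [IsProbabilityMeasure μ]
    (X Y : Ω → ℝ) (hX : MemLp X 2 μ) (hY : MemLp Y 2 μ) :
    (∫ ω, X ω * Y ω ∂μ) ^ 2
      ≤ (∫ ω, X ω ^ 2 ∂μ) * (∫ ω, Y ω ^ 2 ∂μ)
        - (|∫ ω, X ω ∂μ| * Real.sqrt ((∫ ω, Y ω ^ 2 ∂μ) - (∫ ω, Y ω ∂μ) ^ 2)
           - |∫ ω, Y ω ∂μ| * Real.sqrt ((∫ ω, X ω ^ 2 ∂μ) - (∫ ω, X ω ∂μ) ^ 2)) ^ 2 := by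
  have hvarX : (∫ ω, X ω ^ 2 ∂μ) - (∫ ω, X ω ∂μ) ^ 2 = Var[X; μ] := (variance_eq_sub hX).symm
  have hvarY : (∫ ω, Y ω ^ 2 ∂μ) - (∫ ω, Y ω ∂μ) ^ 2 = Var[Y; μ] := (variance_eq_sub hY).symm
  have hmul : ∫ ω, X ω * Y ω ∂μ = (∫ ω, X ω ∂μ) * (∫ ω, Y ω ∂μ) + cov[X, Y; μ] := by
    rw [covariance_eq_sub hX hY]; simp only [Pi.mul_apply]; ring
  have hsqX : ∫ ω, X ω ^ 2 ∂μ = (∫ ω, X ω ∂μ) ^ 2 + √Var[X; μ] ^ 2 := by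
    rw [Real.sq_sqrt (variance_nonneg X μ), ← hvarX]; ring
  have hsqY : ∫ ω, Y ω ^ 2 ∂μ = (∫ ω, Y ω ∂μ) ^ 2 + √Var[Y; μ] ^ 2 := by
    rw [Real.sq_sqrt (variance_nonneg Y μ), ← hvarY]; ring
  rw [hvarX, hvarY, hmul, hsqX, hsqY]
  exact sq_mul_add_le_of_abs_le (abs_covariance_le_sqrt_variance_mul_sqrt_variance hX hY)
end

section
/- For square-integrable real random variables X, Y on a probability space, E[|XY|] ≤ (1/2)·‖X‖₂·‖Y‖₂ + (1/2)·√(‖X‖₂²·‖Y‖₂² − (E[|X|]·σ_{|Y|} − E[|Y|]·σ_{|X|})²), where σ_{|X|} and σ_{|Y|} are the standard deviations of |X| and |Y| and ‖X‖₂ = √(E[X²]). -/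
/-!
Cauchy–Schwarz for the covariance of `|X|` and `|Y|` gives `E|XY| ≤ ab + st`, where `a = E|X|`,
`s = σ_{|X|}`, `b = E|Y|`, `t = σ_{|Y|}`. Since `‖X‖₂² = a² + s²` and `‖Y‖₂² = b² + t²`,
Lagrange's identity `(a² + s²)(b² + t²) - (at - bs)² = (ab + st)²` says that `ab + st` is exactly
the second square root of the bound, and also that it is at most `‖X‖₂ ‖Y‖₂`; so it is at most
the average of the two.
-/

open MeasureTheory ProbabilityTheory

section Real

variable {a b A B : ℝ}

theorem sqrt_mul_sub_sq_eq_mul_add_sqrt_mul_sqrt (ha : 0 ≤ a) (hb : 0 ≤ b)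
    (haA : a ^ 2 ≤ A) (hbB : b ^ 2 ≤ B) :
    √(A * B - (a * √(B - b ^ 2) - b * √(A - a ^ 2)) ^ 2)
      = a * b + √(A - a ^ 2) * √(B - b ^ 2) := by
  have hs := Real.sq_sqrt (sub_nonneg.2 haA)
  have ht := Real.sq_sqrt (sub_nonneg.2 hbB)
  rw [Real.sqrt_eq_iff_eq_sq _ (by positivity)]
  · linear_combination -(b ^ 2 + √(B - b ^ 2) ^ 2) * hs - A * ht
  · nlinarith [sq_nonneg (a * b + √(A - a ^ 2) * √(B - b ^ 2))]

theorem mul_add_sqrt_mul_sqrt_le_sqrt_mul_sqrt (ha : 0 ≤ a) (hb : 0 ≤ b)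
    (haA : a ^ 2 ≤ A) (hbB : b ^ 2 ≤ B) :
    a * b + √(A - a ^ 2) * √(B - b ^ 2) ≤ √A * √B := by
  rw [← sqrt_mul_sub_sq_eq_mul_add_sqrt_mul_sqrt ha hb haA hbB, ← Real.sqrt_mul' _ (by nlinarith)]
  exact Real.sqrt_le_sqrt (sub_le_self _ (sq_nonneg _))

end Real

section Moments

variable {Ω : Type*} [MeasurableSpace Ω] {μ : Measure Ω} {X Y : Ω → ℝ}

theorem integral_mul_le_sqrt_integral_sq_mul_sqrt_integral_sq
    (hX : MemLp X 2 μ) (hY : MemLp Y 2 μ) :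
    ∫ ω, X ω * Y ω ∂μ ≤ √(∫ ω, X ω ^ 2 ∂μ) * √(∫ ω, Y ω ^ 2 ∂μ) := by
  have holder := integral_mul_norm_le_Lp_mul_Lq Real.HolderConjugate.two_two
    (by simpa using hX) (by simpa using hY)
  simp only [Real.norm_eq_abs, Real.rpow_two, sq_abs] at holder
  rw [Real.sqrt_eq_rpow, Real.sqrt_eq_rpow]
  refine le_trans (integral_mono (hX.integrable_mul hY) (hX.norm.integrable_mul hY.norm)
    fun ω ↦ ?_) holder
  exact (le_abs_self _).trans (abs_mul _ _).le

theorem covariance_le_sqrt_variance_mul_sqrt_variance [IsFiniteMeasure μ]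
    (hX : MemLp X 2 μ) (hY : MemLp Y 2 μ) :
    cov[X, Y; μ] ≤ √Var[X; μ] * √Var[Y; μ] := by
  rw [covariance, variance_eq_integral hX.aemeasurable, variance_eq_integral hY.aemeasurable]
  exact integral_mul_le_sqrt_integral_sq_mul_sqrt_integral_sq
    (hX.sub (memLp_const _)) (hY.sub (memLp_const _))

theorem integral_mul_le_integral_mul_integral_add_sqrt_variance_mul [IsProbabilityMeasure μ]
    (hX : MemLp X 2 μ) (hY : MemLp Y 2 μ) :
    ∫ ω, X ω * Y ω ∂μ ≤ μ[X] * μ[Y] + √Var[X; μ] * √Var[Y; μ] := by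
  have hcov := covariance_eq_sub hX hY
  have hcs := covariance_le_sqrt_variance_mul_sqrt_variance hX hY
  simp only [Pi.mul_apply] at hcov
  linarith

theorem variance_abs [IsProbabilityMeasure μ] (hX : MemLp X 2 μ) :
    Var[|X|; μ] = ∫ ω, X ω ^ 2 ∂μ - (∫ ω, |X ω| ∂μ) ^ 2 := by
  rw [variance_eq_sub hX.abs]
  simp only [Pi.pow_apply, Pi.abs_apply, sq_abs]

theorem sq_integral_abs_le_integral_sq [IsProbabilityMeasure μ] (hX : MemLp X 2 μ) :
    (∫ ω, |X ω| ∂μ) ^ 2 ≤ ∫ ω, X ω ^ 2 ∂μ :=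
  sub_nonneg.1 (variance_abs hX ▸ variance_nonneg _ _)

end Moments

theorem stmt18 {Ω : Type*} [MeasurableSpace Ω] (μ : Measure Ω) [IsProbabilityMeasure μ]
    (X Y : Ω → ℝ) (hX : MemLp X 2 μ) (hY : MemLp Y 2 μ) :
    (∫ ω, |X ω * Y ω| ∂μ)
      ≤ (1 / 2) * Real.sqrt (∫ ω, X ω ^ 2 ∂μ) * Real.sqrt (∫ ω, Y ω ^ 2 ∂μ)
        + (1 / 2) * Real.sqrt ((∫ ω, X ω ^ 2 ∂μ) * (∫ ω, Y ω ^ 2 ∂μ)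
            - ((∫ ω, |X ω| ∂μ) * Real.sqrt ((∫ ω, Y ω ^ 2 ∂μ) - (∫ ω, |Y ω| ∂μ) ^ 2)
               - (∫ ω, |Y ω| ∂μ) * Real.sqrt ((∫ ω, X ω ^ 2 ∂μ) - (∫ ω, |X ω| ∂μ) ^ 2)) ^ 2) := by
  have ha : 0 ≤ ∫ ω, |X ω| ∂μ := integral_nonneg fun _ ↦ abs_nonneg _
  have hb : 0 ≤ ∫ ω, |Y ω| ∂μ := integral_nonneg fun _ ↦ abs_nonneg _
  have haA := sq_integral_abs_le_integral_sq hX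
  have hbB := sq_integral_abs_le_integral_sq hY
  have habs := integral_mul_le_integral_mul_integral_add_sqrt_variance_mul hX.abs hY.abs
  rw [variance_abs hX, variance_abs hY] at habs
  simp only [Pi.abs_apply] at habs
  simp_rw [abs_mul]
  rw [sqrt_mul_sub_sq_eq_mul_add_sqrt_mul_sqrt ha hb haA hbB]
  linarith [mul_add_sqrt_mul_sqrt_le_sqrt_mul_sqrt ha hb haA hbB]
end

section
/- (Refined Hölder inequality) Let p, q > 1 with 1/p + 1/q = 1, and let X ∈ L^p, Y ∈ L^q be real random variables on a probability space. Set U := |X|^{p/2} and V := |Y|^{q/2} (both in L²). Then E[|XY|] ≤ ‖X‖_p·‖Y‖_q · ( 1/p² + 1/q² + (2/(pq))·√(1 − ((σ_V·E[|X|^{p/2}] − σ_U·E[|Y|^{q/2}]) / (‖X‖_p^{p/2}·‖Y‖_q^{q/2}))²) ) ≤ ‖X‖_p·‖Y‖_q, assuming ‖X‖_p > 0 and ‖Y‖_q > 0. -/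
/-!
Apply Young's inequality to `√x, √y` for the normalized values `x = |X| / ‖X‖_p`,
`y = |Y| / ‖Y‖_q` and square it: `x y ≤ x^p / p² + y^q / q² + (2 / pq) x^{p/2} y^{q/2}`.
Integrating, the cross term becomes `E[UV] / (‖X‖_p^{p/2} ‖Y‖_q^{q/2})`. Cauchy–Schwarz for the
covariance gives `E[UV] ≤ E[U] E[V] + σ_U σ_V`, and by Lagrange's identity
`(E[U] E[V] + σ_U σ_V)² = E[U²] E[V²] - (σ_V E[U] - σ_U E[V])²` with `E[U²] = ‖X‖_p^p`,
`E[V²] = ‖Y‖_q^q`. The upper bound `‖X‖_p ‖Y‖_q` is `(1/p + 1/q)² = 1`.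
-/

open MeasureTheory ProbabilityTheory

lemma Real.rpow_div_two_sq {x : ℝ} (hx : 0 ≤ x) (p : ℝ) : (x ^ (p / 2)) ^ 2 = x ^ p := by
  rw [← Real.rpow_natCast, ← Real.rpow_mul hx]
  norm_num

lemma Real.mul_le_young_sq {p q : ℝ} (hpq : p.HolderConjugate q) {x y : ℝ} (hx : 0 ≤ x)
    (hy : 0 ≤ y) :
    x * y ≤ x ^ p / p ^ 2 + y ^ q / q ^ 2 + 2 / (p * q) * (x ^ (p / 2) * y ^ (q / 2)) := by
  have hp := hpq.pos
  have hq := hpq.symm.pos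
  have h := Real.young_inequality_of_nonneg (Real.sqrt_nonneg x) (Real.sqrt_nonneg y) hpq
  rw [← Real.rpow_div_two_eq_sqrt _ hx, ← Real.rpow_div_two_eq_sqrt _ hy] at h
  calc x * y = (√x * √y) ^ 2 := by rw [mul_pow, Real.sq_sqrt hx, Real.sq_sqrt hy]
    _ ≤ (x ^ (p / 2) / p + y ^ (q / 2) / q) ^ 2 := by gcongr
    _ = _ := by
      rw [add_sq, div_pow, div_pow, Real.rpow_div_two_sq hx, Real.rpow_div_two_sq hy]
      field_simp
      ring

lemma Real.one_div_sq_add_one_div_sq_add_mul_le_one {p q r : ℝ} (hpq : p.HolderConjugate q)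
    (hr : r ≤ 1) : 1 / p ^ 2 + 1 / q ^ 2 + 2 / (p * q) * r ≤ 1 := by
  have hp := hpq.pos
  have hq := hpq.symm.pos
  calc 1 / p ^ 2 + 1 / q ^ 2 + 2 / (p * q) * r ≤ 1 / p ^ 2 + 1 / q ^ 2 + 2 / (p * q) := by
        gcongr; exact mul_le_of_le_one_right (by positivity) hr
    _ = (p⁻¹ + q⁻¹) ^ 2 := by field_simp; ring
    _ = 1 := by rw [hpq.inv_add_inv_eq_one, one_pow]

lemma Real.div_le_sqrt_one_sub_sq {c d n : ℝ} (hd : 0 < d) (hc : c ≤ √(d ^ 2 - n ^ 2)) :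
    c / d ≤ √(1 - (n / d) ^ 2) := by
  have h : √(1 - (n / d) ^ 2) * d = √(d ^ 2 - n ^ 2) := by
    rw [← Real.sqrt_sq hd.le, ← Real.sqrt_mul' _ (sq_nonneg _), Real.sqrt_sq hd.le]
    congr 1
    field_simp
  rwa [div_le_iff₀ hd, h]

lemma MeasureTheory.MemLp.abs_rpow_div_two {Ω : Type*} {mΩ : MeasurableSpace Ω} {μ : Measure Ω}
    {X : Ω → ℝ} {p : ℝ} (hp : 0 < p) (hX : MemLp X (ENNReal.ofReal p) μ) :
    MemLp (fun ω => |X ω| ^ (p / 2)) 2 μ := by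
  convert hX.norm_rpow_div (ENNReal.ofReal (p / 2)) using 1
  · rw [ENNReal.toReal_ofReal (by positivity)]; rfl
  · rw [← ENNReal.ofReal_div_of_pos (by positivity)]
    field_simp
    norm_num

namespace ProbabilityTheory
variable {Ω : Type*} {mΩ : MeasurableSpace Ω} {μ : Measure Ω} {X Y : Ω → ℝ}

lemma covariance_le_sqrt_variance_mul [IsFiniteMeasure μ] (hX : MemLp X 2 μ) (hY : MemLp Y 2 μ) :
    cov[X, Y; μ] ≤ √Var[X; μ] * √Var[Y; μ] := by
  have hX' : MemLp (fun ω => |X ω - μ[X]|) (ENNReal.ofReal 2) μ := by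
    simpa using (hX.sub (memLp_const μ[X])).norm
  have hY' : MemLp (fun ω => |Y ω - μ[Y]|) (ENNReal.ofReal 2) μ := by
    simpa using (hY.sub (memLp_const μ[Y])).norm
  have hvar : ∀ Z : Ω → ℝ, MemLp Z 2 μ → ∫ ω, |Z ω - μ[Z]| ^ (2 : ℝ) ∂μ = Var[Z; μ] := by
    intro Z hZ
    simp only [Real.rpow_two, sq_abs, variance_eq_integral hZ.aemeasurable]
  calc cov[X, Y; μ] ≤ ∫ ω, |X ω - μ[X]| * |Y ω - μ[Y]| ∂μ := by
        rw [covariance]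
        refine integral_mono ?_ ?_ fun ω => ?_
        · exact (hX.sub (memLp_const μ[X])).integrable_mul (hY.sub (memLp_const μ[Y]))
        · exact (hX.sub (memLp_const μ[X])).norm.integrable_mul (hY.sub (memLp_const μ[Y])).norm
        · rw [← abs_mul]; exact le_abs_self _
    _ ≤ _ := by
        have := integral_mul_le_Lp_mul_Lq_of_nonneg Real.HolderConjugate.two_two
          (ae_of_all _ fun ω => abs_nonneg _) (ae_of_all _ fun ω => abs_nonneg _) hX' hY'
        rwa [hvar X hX, hvar Y hY, ← Real.sqrt_eq_rpow, ← Real.sqrt_eq_rpow] at this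

lemma integral_mul_le_sqrt_sub_sq [IsProbabilityMeasure μ] (hX : MemLp X 2 μ) (hY : MemLp Y 2 μ) :
    ∫ ω, X ω * Y ω ∂μ ≤ √((∫ ω, X ω ^ 2 ∂μ) * (∫ ω, Y ω ^ 2 ∂μ)
      - (√Var[Y; μ] * μ[X] - √Var[X; μ] * μ[Y]) ^ 2) := by
  have hsecond : ∀ Z : Ω → ℝ, MemLp Z 2 μ → ∫ ω, Z ω ^ 2 ∂μ = μ[Z] ^ 2 + √Var[Z; μ] ^ 2 := by
    intro Z hZ
    rw [Real.sq_sqrt (variance_nonneg Z μ), variance_eq_sub hZ]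
    simp [Pi.pow_apply]
  have hcov := covariance_le_sqrt_variance_mul hX hY
  rw [covariance_eq_sub hX hY] at hcov
  -- Lagrange's identity for the vectors `(μ[X], √Var[X])` and `(μ[Y], √Var[Y])`
  calc ∫ ω, X ω * Y ω ∂μ ≤ μ[X] * μ[Y] + √Var[X; μ] * √Var[Y; μ] := by
        simp only [Pi.mul_apply] at hcov; linarith
    _ ≤ |μ[X] * μ[Y] + √Var[X; μ] * √Var[Y; μ]| := le_abs_self _
    _ = _ := by
        rw [← Real.sqrt_sq_eq_abs, hsecond X hX, hsecond Y hY]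
        ring_nf

end ProbabilityTheory

lemma MeasureTheory.integral_abs_mul_le_young_sq {Ω : Type*} {mΩ : MeasurableSpace Ω}
    {μ : Measure Ω} {p q : ℝ} (hpq : p.HolderConjugate q) {X Y : Ω → ℝ}
    (hX : MemLp X (ENNReal.ofReal p) μ) (hY : MemLp Y (ENNReal.ofReal q) μ) {s t : ℝ}
    (hs : 0 < s) (ht : 0 < t) (hsX : s ^ p = ∫ ω, |X ω| ^ p ∂μ)
    (htY : t ^ q = ∫ ω, |Y ω| ^ q ∂μ) :
    ∫ ω, |X ω * Y ω| ∂μ ≤ s * t * (1 / p ^ 2 + 1 / q ^ 2 + 2 / (p * q)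
      * ((∫ ω, |X ω| ^ (p / 2) * |Y ω| ^ (q / 2) ∂μ) / (s ^ (p / 2) * t ^ (q / 2)))) := by
  have hp := hpq.pos
  have hq := hpq.symm.pos
  have hXp : Integrable (fun ω => |X ω| ^ p) μ := by
    simpa [ENNReal.toReal_ofReal hp.le] using hX.integrable_norm_rpow (by simpa using hp)
      ENNReal.ofReal_ne_top
  have hYq : Integrable (fun ω => |Y ω| ^ q) μ := by
    simpa [ENNReal.toReal_ofReal hq.le] using hY.integrable_norm_rpow (by simpa using hq)
      ENNReal.ofReal_ne_top
  have hUV : Integrable (fun ω => |X ω| ^ (p / 2) * |Y ω| ^ (q / 2)) μ :=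
    (hX.abs_rpow_div_two hp).integrable_mul (hY.abs_rpow_div_two hq)
  have hfirst :
      Integrable (fun ω => |X ω| ^ p / (p ^ 2 * s ^ p) + |Y ω| ^ q / (q ^ 2 * t ^ q)) μ :=
    (hXp.div_const _).add (hYq.div_const _)
  have hpoint : ∀ ω, |X ω * Y ω| ≤ s * t * (|X ω| ^ p / (p ^ 2 * s ^ p)
      + |Y ω| ^ q / (q ^ 2 * t ^ q)
      + 2 / (p * q) * (|X ω| ^ (p / 2) * |Y ω| ^ (q / 2) / (s ^ (p / 2) * t ^ (q / 2)))) := by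
    intro ω
    have h := Real.mul_le_young_sq hpq (div_nonneg (abs_nonneg (X ω)) hs.le)
      (div_nonneg (abs_nonneg (Y ω)) ht.le)
    simp only [Real.div_rpow (abs_nonneg _) hs.le, Real.div_rpow (abs_nonneg _) ht.le] at h
    calc |X ω * Y ω| = s * t * (|X ω| / s * (|Y ω| / t)) := by
          rw [abs_mul]; field_simp
      _ ≤ _ := by
          gcongr
          exact h.trans_eq (by ring)
  calc ∫ ω, |X ω * Y ω| ∂μ ≤ ∫ ω, s * t * (|X ω| ^ p / (p ^ 2 * s ^ p)
      + |Y ω| ^ q / (q ^ 2 * t ^ q)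
      + 2 / (p * q) * (|X ω| ^ (p / 2) * |Y ω| ^ (q / 2) / (s ^ (p / 2) * t ^ (q / 2)))) ∂μ :=
        integral_mono_of_nonneg (ae_of_all _ fun ω => abs_nonneg _)
          ((hfirst.add ((hUV.div_const _).const_mul _)).const_mul _)
          (ae_of_all _ hpoint)
    _ = _ := by
        rw [integral_const_mul, integral_add hfirst ((hUV.div_const _).const_mul _),
          integral_add (hXp.div_const _) (hYq.div_const _), integral_div, integral_div,
          integral_const_mul, integral_div, ← hsX, ← htY]
        field_simp

theorem stmt19_general {Ω : Type*} [MeasurableSpace Ω] (μ : Measure Ω) [IsProbabilityMeasure μ]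
    (p q : ℝ) (hp : 1 < p) (hpq : 1 / p + 1 / q = 1)
    (X Y : Ω → ℝ)
    (hX : MemLp X (ENNReal.ofReal p) μ) (hY : MemLp Y (ENNReal.ofReal q) μ)
    (Xp : ℝ) (hXp : Xp = (∫ ω, |X ω| ^ p ∂μ) ^ (1 / p))
    (Yq : ℝ) (hYq : Yq = (∫ ω, |Y ω| ^ q ∂μ) ^ (1 / q))
    (hXpos : 0 < Xp) (hYpos : 0 < Yq)
    (U V : Ω → ℝ) (hU : U = fun ω => |X ω| ^ (p / 2)) (hV : V = fun ω => |Y ω| ^ (q / 2))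
    (σU σV : ℝ)
    (hσU : σU = Real.sqrt ((∫ ω, U ω ^ 2 ∂μ) - (∫ ω, U ω ∂μ) ^ 2))
    (hσV : σV = Real.sqrt ((∫ ω, V ω ^ 2 ∂μ) - (∫ ω, V ω ∂μ) ^ 2)) :
    (∫ ω, |X ω * Y ω| ∂μ)
      ≤ Xp * Yq * (1 / p ^ 2 + 1 / q ^ 2
          + (2 / (p * q)) * Real.sqrt (1 -
              ((σV * (∫ ω, U ω ∂μ) - σU * (∫ ω, V ω ∂μ))
                / (Xp ^ (p / 2) * Yq ^ (q / 2))) ^ 2))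
      ∧ Xp * Yq * (1 / p ^ 2 + 1 / q ^ 2
          + (2 / (p * q)) * Real.sqrt (1 -
              ((σV * (∫ ω, U ω ∂μ) - σU * (∫ ω, V ω ∂μ))
                / (Xp ^ (p / 2) * Yq ^ (q / 2))) ^ 2)) ≤ Xp * Yq := by
  have hpq' : p.HolderConjugate q :=
    Real.holderConjugate_iff.2 ⟨hp, by simpa only [one_div] using hpq⟩
  have hU2 : MemLp U 2 μ := hU ▸ hX.abs_rpow_div_two hpq'.pos
  have hV2 : MemLp V 2 μ := hV ▸ hY.abs_rpow_div_two hpq'.symm.pos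
  have hXpX : Xp ^ p = ∫ ω, |X ω| ^ p ∂μ := by
    rw [hXp, one_div, Real.rpow_inv_rpow (integral_nonneg fun _ => by positivity) hpq'.ne_zero]
  have hYqY : Yq ^ q = ∫ ω, |Y ω| ^ q ∂μ := by
    rw [hYq, one_div, Real.rpow_inv_rpow (integral_nonneg fun _ => by positivity)
      hpq'.symm.ne_zero]
  have hσU' : σU = √Var[U; μ] := by rw [hσU, variance_eq_sub hU2]; rfl
  have hσV' : σV = √Var[V; μ] := by rw [hσV, variance_eq_sub hV2]; rfl
  have hcorr : (∫ ω, U ω * V ω ∂μ) / (Xp ^ (p / 2) * Yq ^ (q / 2)) ≤ √(1 -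
      ((σV * (∫ ω, U ω ∂μ) - σU * (∫ ω, V ω ∂μ)) / (Xp ^ (p / 2) * Yq ^ (q / 2))) ^ 2) := by
    refine Real.div_le_sqrt_one_sub_sq (by positivity) ?_
    rw [mul_pow, Real.rpow_div_two_sq hXpos.le, Real.rpow_div_two_sq hYpos.le, hXpX, hYqY,
      hσU', hσV']
    convert integral_mul_le_sqrt_sub_sq hU2 hV2 using 4 <;> simp [hU, hV, Real.rpow_div_two_sq]
  refine ⟨(integral_abs_mul_le_young_sq hpq' hX hY hXpos hYpos hXpX hYqY).trans ?_,
    mul_le_of_le_one_right (by positivity) (Real.one_div_sq_add_one_div_sq_add_mul_le_one hpq'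
      (Real.sqrt_le_one.2 (sub_le_self 1 (sq_nonneg _))))⟩
  subst hU hV
  gcongr
  exact (div_pos two_pos (mul_pos hpq'.pos hpq'.symm.pos)).le

theorem stmt19 {Ω : Type*} [MeasurableSpace Ω] (μ : Measure Ω) [IsProbabilityMeasure μ]
    (p q : ℝ) (hp : 1 < p) (hq : 1 < q) (hpq : 1 / p + 1 / q = 1)
    (X Y : Ω → ℝ)
    (hX : MemLp X (ENNReal.ofReal p) μ) (hY : MemLp Y (ENNReal.ofReal q) μ)
    (Xp : ℝ) (hXp : Xp = (∫ ω, |X ω| ^ p ∂μ) ^ (1 / p))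
    (Yq : ℝ) (hYq : Yq = (∫ ω, |Y ω| ^ q ∂μ) ^ (1 / q))
    (hXpos : 0 < Xp) (hYpos : 0 < Yq)
    (U V : Ω → ℝ) (hU : U = fun ω => |X ω| ^ (p / 2)) (hV : V = fun ω => |Y ω| ^ (q / 2))
    (σU σV : ℝ)
    (hσU : σU = Real.sqrt ((∫ ω, U ω ^ 2 ∂μ) - (∫ ω, U ω ∂μ) ^ 2))
    (hσV : σV = Real.sqrt ((∫ ω, V ω ^ 2 ∂μ) - (∫ ω, V ω ∂μ) ^ 2)) :
    (∫ ω, |X ω * Y ω| ∂μ)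
      ≤ Xp * Yq * (1 / p ^ 2 + 1 / q ^ 2
          + (2 / (p * q)) * Real.sqrt (1 -
              ((σV * (∫ ω, U ω ∂μ) - σU * (∫ ω, V ω ∂μ))
                / (Xp ^ (p / 2) * Yq ^ (q / 2))) ^ 2))
      ∧ Xp * Yq * (1 / p ^ 2 + 1 / q ^ 2
          + (2 / (p * q)) * Real.sqrt (1 -
              ((σV * (∫ ω, U ω ∂μ) - σU * (∫ ω, V ω ∂μ))
                / (Xp ^ (p / 2) * Yq ^ (q / 2))) ^ 2)) ≤ Xp * Yq :=
  stmt19_general μ p q hp hpq X Y hX hY Xp hXp Yq hYq hXpos hYpos U V hU hV σU σV hσU hσV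
end
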